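/- For every h in the subgroup of SL(2,ℂ) generated by two elements h₁ and h₂, the trace tr(h) lies in the subring ℤ[tr(h₁), tr(h₂), tr(h₁h₂)] of ℂ generated over ℤ by tr(h₁), tr(h₂), and tr(h₁h₂). -/
import Mathlib

open Matrix

private lemma tr_sq_mid (A B C : Matrix (Fin 2) (Fin 2) ℂ) :
    (A*B*B*C).trace = B.trace * (A*B*C).trace - B.det * (A*C).trace := by
  simp [Matrix.trace_fin_two, Matrix.mul_apply, Fin.sum_univ_two, Matrix.det_fin_two]; ring

private lemma tr_sq (A B : Matrix (Fin 2) (Fin 2) ℂ) :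
    (A*B*B).trace = B.trace * (A*B).trace - B.det * A.trace := by
  simp [Matrix.trace_fin_two, Matrix.mul_apply, Fin.sum_univ_two, Matrix.det_fin_two]; ring

private lemma tr_triple (A B C : Matrix (Fin 2) (Fin 2) ℂ) :
    (A*B*C).trace + (A*C*B).trace =
      A.trace * (B*C).trace + B.trace * (A*C).trace + C.trace * (A*B).trace
        - A.trace * B.trace * C.trace := by
  simp [Matrix.trace_fin_two, Matrix.mul_apply, Fin.sum_univ_two]; ring

private lemma tr4 (A B C : Matrix (Fin 2) (Fin 2) ℂ) :
    (A*B*C*B).trace = (A*B).trace * (C*B).trace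
      - B.det * (C.trace * A.trace - (A*C).trace) := by
  simp [Matrix.trace_fin_two, Matrix.mul_apply, Fin.sum_univ_two, Matrix.det_fin_two]; ring

private lemma tr_adj (A B : Matrix (Fin 2) (Fin 2) ℂ) :
    (A * B.adjugate).trace = B.trace * A.trace - (A*B).trace := by
  simp [Matrix.adjugate_fin_two, Matrix.trace_fin_two, Matrix.mul_apply, Fin.sum_univ_two]; ring

private lemma tr_adj_mid (A B C : Matrix (Fin 2) (Fin 2) ℂ) :
    (A * B.adjugate * C).trace = B.trace * (A*C).trace - (A*B*C).trace := by
  simp [Matrix.adjugate_fin_two, Matrix.trace_fin_two, Matrix.mul_apply, Fin.sum_univ_two]; ring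

private lemma tr_adj_mid2 (A B C D : Matrix (Fin 2) (Fin 2) ℂ) :
    (A * B.adjugate * C * D).trace = B.trace * (A*C*D).trace - (A*B*C*D).trace := by
  simp [Matrix.adjugate_fin_two, Matrix.trace_fin_two, Matrix.mul_apply, Fin.sum_univ_two]; ring

theorem trace_in_subring_of_generators (h₁ h₂ : Matrix.SpecialLinearGroup (Fin 2) ℂ) :
    ∀ h ∈ Subgroup.closure {h₁, h₂},
      ((h : Matrix.SpecialLinearGroup (Fin 2) ℂ) : Matrix (Fin 2) (Fin 2) ℂ).trace ∈
        Subring.closure {((h₁ : Matrix (Fin 2) (Fin 2) ℂ)).trace,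
          ((h₂ : Matrix (Fin 2) (Fin 2) ℂ)).trace,
          (((h₁ * h₂ : Matrix.SpecialLinearGroup (Fin 2) ℂ) :
            Matrix (Fin 2) (Fin 2) ℂ)).trace} := by
  set R : Subring ℂ := Subring.closure {((h₁ : Matrix (Fin 2) (Fin 2) ℂ)).trace,
          ((h₂ : Matrix (Fin 2) (Fin 2) ℂ)).trace,
          (((h₁ * h₂ : Matrix.SpecialLinearGroup (Fin 2) ℂ) :
            Matrix (Fin 2) (Fin 2) ℂ)).trace} with hR
  have hx : ((h₁ : Matrix (Fin 2) (Fin 2) ℂ)).trace ∈ R :=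
    Subring.subset_closure (by left; rfl)
  have hy : ((h₂ : Matrix (Fin 2) (Fin 2) ℂ)).trace ∈ R :=
    Subring.subset_closure (by right; left; rfl)
  have hz' : (((h₁ * h₂ : Matrix.SpecialLinearGroup (Fin 2) ℂ) :
      Matrix (Fin 2) (Fin 2) ℂ)).trace ∈ R :=
    Subring.subset_closure (by right; right; rfl)
  have hz : (((h₁ : Matrix (Fin 2) (Fin 2) ℂ)) * ((h₂ : Matrix (Fin 2) (Fin 2) ℂ))).trace ∈ R := by
    rwa [Matrix.SpecialLinearGroup.coe_mul] at hz'
  have main : ∀ g ∈ Subgroup.closure {h₁, h₂},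
      ((g : Matrix.SpecialLinearGroup (Fin 2) ℂ) : Matrix (Fin 2) (Fin 2) ℂ).trace ∈ R ∧
      (((g * h₁ : Matrix.SpecialLinearGroup (Fin 2) ℂ)) : Matrix (Fin 2) (Fin 2) ℂ).trace ∈ R ∧
      (((g * h₂ : Matrix.SpecialLinearGroup (Fin 2) ℂ)) : Matrix (Fin 2) (Fin 2) ℂ).trace ∈ R ∧
      (((g * h₁ * h₂ : Matrix.SpecialLinearGroup (Fin 2) ℂ)) :
        Matrix (Fin 2) (Fin 2) ℂ).trace ∈ R := by
    intro g hg
    induction hg using Subgroup.closure_induction_right with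
    | one =>
      have h2 : (2 : ℂ) ∈ R := by
        rw [show (2:ℂ) = 1 + 1 by norm_num]; exact add_mem (one_mem R) (one_mem R)
      refine ⟨?_, ?_, ?_, ?_⟩
      · simpa [Matrix.SpecialLinearGroup.coe_one, Matrix.trace_one] using h2
      · rw [one_mul]; exact hx
      · rw [one_mul]; exact hy
      · rw [one_mul]; exact hz'
    | mul_right g hg w hw ih =>
      obtain ⟨ha, hb, hc, hd⟩ := ih
      simp only [Matrix.SpecialLinearGroup.coe_mul] at hb hc hd
      simp only [Set.mem_insert_iff, Set.mem_singleton_iff] at hw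
      rcases hw with hw | hw <;> rw [hw]
      · refine ⟨?_, ?_, ?_, ?_⟩ <;> simp only [Matrix.SpecialLinearGroup.coe_mul]
        · exact hb
        · rw [tr_sq, Matrix.SpecialLinearGroup.det_coe, one_mul]
          exact sub_mem (mul_mem hx hb) ha
        · exact hd
        · rw [tr_sq_mid, Matrix.SpecialLinearGroup.det_coe, one_mul]
          exact sub_mem (mul_mem hx hd) hc
      · have e : (((g : Matrix.SpecialLinearGroup (Fin 2) ℂ) : Matrix (Fin 2) (Fin 2) ℂ) *
            (h₂ : Matrix (Fin 2) (Fin 2) ℂ) * (h₁ : Matrix (Fin 2) (Fin 2) ℂ)).trace ∈ R := by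
          have t := tr_triple ((g : Matrix.SpecialLinearGroup (Fin 2) ℂ) :
            Matrix (Fin 2) (Fin 2) ℂ) (h₁ : Matrix (Fin 2) (Fin 2) ℂ)
            (h₂ : Matrix (Fin 2) (Fin 2) ℂ)
          have e2 : (((g : Matrix.SpecialLinearGroup (Fin 2) ℂ) : Matrix (Fin 2) (Fin 2) ℂ) *
              (h₂ : Matrix (Fin 2) (Fin 2) ℂ) * (h₁ : Matrix (Fin 2) (Fin 2) ℂ)).trace =
              ((g : Matrix.SpecialLinearGroup (Fin 2) ℂ) : Matrix (Fin 2) (Fin 2) ℂ).trace *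
                ((h₁ : Matrix (Fin 2) (Fin 2) ℂ) * (h₂ : Matrix (Fin 2) (Fin 2) ℂ)).trace +
              ((h₁ : Matrix (Fin 2) (Fin 2) ℂ)).trace *
                (((g : Matrix.SpecialLinearGroup (Fin 2) ℂ) : Matrix (Fin 2) (Fin 2) ℂ) *
                  (h₂ : Matrix (Fin 2) (Fin 2) ℂ)).trace +
              ((h₂ : Matrix (Fin 2) (Fin 2) ℂ)).trace *
                (((g : Matrix.SpecialLinearGroup (Fin 2) ℂ) : Matrix (Fin 2) (Fin 2) ℂ) *
                  (h₁ : Matrix (Fin 2) (Fin 2) ℂ)).trace -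
              ((g : Matrix.SpecialLinearGroup (Fin 2) ℂ) : Matrix (Fin 2) (Fin 2) ℂ).trace *
                ((h₁ : Matrix (Fin 2) (Fin 2) ℂ)).trace *
                ((h₂ : Matrix (Fin 2) (Fin 2) ℂ)).trace -
              (((g : Matrix.SpecialLinearGroup (Fin 2) ℂ) : Matrix (Fin 2) (Fin 2) ℂ) *
                (h₁ : Matrix (Fin 2) (Fin 2) ℂ) * (h₂ : Matrix (Fin 2) (Fin 2) ℂ)).trace := by
            linear_combination t
          rw [e2]
          exact sub_mem (sub_mem (add_mem (add_mem (mul_mem ha hz) (mul_mem hx hc))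
            (mul_mem hy hb)) (mul_mem (mul_mem ha hx) hy)) hd
        refine ⟨?_, ?_, ?_, ?_⟩ <;> simp only [Matrix.SpecialLinearGroup.coe_mul]
        · exact hc
        · exact e
        · rw [tr_sq, Matrix.SpecialLinearGroup.det_coe, one_mul]
          exact sub_mem (mul_mem hy hc) ha
        · rw [tr4, Matrix.SpecialLinearGroup.det_coe, one_mul]
          exact sub_mem (mul_mem hc hz) (sub_mem (mul_mem hx ha) hb)
    | mul_inv_cancel g hg w hw ih =>
      obtain ⟨ha, hb, hc, hd⟩ := ih
      simp only [Matrix.SpecialLinearGroup.coe_mul] at hb hc hd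
      simp only [Set.mem_insert_iff, Set.mem_singleton_iff] at hw
      rcases hw with hw | hw <;> rw [hw]
      · refine ⟨?_, ?_, ?_, ?_⟩
        · simp only [Matrix.SpecialLinearGroup.coe_mul, Matrix.SpecialLinearGroup.coe_inv]
          rw [tr_adj]
          exact sub_mem (mul_mem hx ha) hb
        · rw [inv_mul_cancel_right]; exact ha
        · simp only [Matrix.SpecialLinearGroup.coe_mul, Matrix.SpecialLinearGroup.coe_inv]
          rw [tr_adj_mid]
          exact sub_mem (mul_mem hx hc) hd
        · rw [inv_mul_cancel_right]; exact hc
      · have e : (((g : Matrix.SpecialLinearGroup (Fin 2) ℂ) : Matrix (Fin 2) (Fin 2) ℂ) *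
            (h₂ : Matrix (Fin 2) (Fin 2) ℂ) * (h₁ : Matrix (Fin 2) (Fin 2) ℂ)).trace ∈ R := by
          have t := tr_triple ((g : Matrix.SpecialLinearGroup (Fin 2) ℂ) :
            Matrix (Fin 2) (Fin 2) ℂ) (h₁ : Matrix (Fin 2) (Fin 2) ℂ)
            (h₂ : Matrix (Fin 2) (Fin 2) ℂ)
          have e2 : (((g : Matrix.SpecialLinearGroup (Fin 2) ℂ) : Matrix (Fin 2) (Fin 2) ℂ) *
              (h₂ : Matrix (Fin 2) (Fin 2) ℂ) * (h₁ : Matrix (Fin 2) (Fin 2) ℂ)).trace =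
              ((g : Matrix.SpecialLinearGroup (Fin 2) ℂ) : Matrix (Fin 2) (Fin 2) ℂ).trace *
                ((h₁ : Matrix (Fin 2) (Fin 2) ℂ) * (h₂ : Matrix (Fin 2) (Fin 2) ℂ)).trace +
              ((h₁ : Matrix (Fin 2) (Fin 2) ℂ)).trace *
                (((g : Matrix.SpecialLinearGroup (Fin 2) ℂ) : Matrix (Fin 2) (Fin 2) ℂ) *
                  (h₂ : Matrix (Fin 2) (Fin 2) ℂ)).trace +
              ((h₂ : Matrix (Fin 2) (Fin 2) ℂ)).trace *
                (((g : Matrix.SpecialLinearGroup (Fin 2) ℂ) : Matrix (Fin 2) (Fin 2) ℂ) *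
                  (h₁ : Matrix (Fin 2) (Fin 2) ℂ)).trace -
              ((g : Matrix.SpecialLinearGroup (Fin 2) ℂ) : Matrix (Fin 2) (Fin 2) ℂ).trace *
                ((h₁ : Matrix (Fin 2) (Fin 2) ℂ)).trace *
                ((h₂ : Matrix (Fin 2) (Fin 2) ℂ)).trace -
              (((g : Matrix.SpecialLinearGroup (Fin 2) ℂ) : Matrix (Fin 2) (Fin 2) ℂ) *
                (h₁ : Matrix (Fin 2) (Fin 2) ℂ) * (h₂ : Matrix (Fin 2) (Fin 2) ℂ)).trace := by
            linear_combination t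
          rw [e2]
          exact sub_mem (sub_mem (add_mem (add_mem (mul_mem ha hz) (mul_mem hx hc))
            (mul_mem hy hb)) (mul_mem (mul_mem ha hx) hy)) hd
        refine ⟨?_, ?_, ?_, ?_⟩
        · simp only [Matrix.SpecialLinearGroup.coe_mul, Matrix.SpecialLinearGroup.coe_inv]
          rw [tr_adj]
          exact sub_mem (mul_mem hy ha) hc
        · simp only [Matrix.SpecialLinearGroup.coe_mul, Matrix.SpecialLinearGroup.coe_inv]
          rw [tr_adj_mid]
          exact sub_mem (mul_mem hy hb) e
        · rw [inv_mul_cancel_right]; exact ha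
        · simp only [Matrix.SpecialLinearGroup.coe_mul, Matrix.SpecialLinearGroup.coe_inv]
          rw [tr_adj_mid2, tr4, Matrix.SpecialLinearGroup.det_coe, one_mul]
          exact sub_mem (mul_mem hy hd)
            (sub_mem (mul_mem hc hz) (sub_mem (mul_mem hx ha) hb))
      
  intro h hh
  exact (main h hh).1
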